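/- arXiv:math-ph/0409001 — 6 statements merged into one kernel-verified Lean document; each statement's English description precedes it below -/
import Mathlib

section
/- Let A ∈ ℂ³ and let cF(A) be the 4×4 complex matrix with block form [[0, Aᵗ],[A, ×(-iA)]], where ×(w) denotes the 3×3 matrix of cross product by w (i.e. ×(w)v = v × w). Then cF(A)² = ⟨A,A⟩·I, where ⟨·,·⟩ is the complex-bilinear extension of the Euclidean inner product on ℂ³. -/
open Matrix

noncomputable section

/-- Cross product `v × w`. -/
def crossVec {α : Type*} [CommRing α] (v w : Fin 3 → α) : Fin 3 → α :=
  ![v 1 * w 2 - v 2 * w 1, v 2 * w 0 - v 0 * w 2, v 0 * w 1 - v 1 * w 0]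

/-- The matrix `×w`, satisfying `(×w) v = v × w`. -/
def crossMat {α : Type*} [CommRing α] (w : Fin 3 → α) : Matrix (Fin 3) (Fin 3) α :=
  !![0, w 2, -(w 1); -(w 2), 0, w 0; w 1, -(w 0), 0]

/-- The block matrix `[[0, Aᵗ],[A, ×C]]`. -/
def blockM {α : Type*} [CommRing α] (A C : Fin 3 → α) : Matrix (Fin 4) (Fin 4) α :=
  !![0,     A 0,      A 1,      A 2;
     A 0,   0,        C 2,      -(C 1);
     A 1,   -(C 2),   0,        C 0;
     A 2,   C 1,      -(C 0),   0]

/-- `cF(A) = [[0, Aᵗ],[A, ×(-iA)]]`. -/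
def cF (A : Fin 3 → ℂ) : Matrix (Fin 4) (Fin 4) ℂ := blockM A ((-Complex.I) • A)

/-- `c̄F(A) = [[0, Aᵗ],[A, ×(iA)]]`. -/
def cFbar (A : Fin 3 → ℂ) : Matrix (Fin 4) (Fin 4) ℂ := blockM A (Complex.I • A)

/-- The complex-bilinear inner product on ℂ³. -/
def bilin (v w : Fin 3 → ℂ) : ℂ := v 0 * w 0 + v 1 * w 1 + v 2 * w 2

/-! With `C = c • A` and `c² = -1`, the square of `[[0, Aᵗ],[A, ×C]]` has off-diagonal blocks
`±(A × C) = 0`, and its lower right block is `A Aᵗ + (×C)² = A Aᵗ + C Cᵗ - ⟨C,C⟩ I = ⟨A,A⟩ I`, since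
`C Cᵗ = -A Aᵗ` and `⟨C,C⟩ = -⟨A,A⟩`. -/

theorem blockM_smul_mul_self {α : Type*} [CommRing α] (A : Fin 3 → α) {c : α} (hc : c * c = -1) :
    blockM A (c • A) * blockM A (c • A) = (A ⬝ᵥ A) • (1 : Matrix (Fin 4) (Fin 4) α) := by
  ext i j
  fin_cases i <;> fin_cases j <;>
    simp only [blockM, mul_apply, Fin.sum_univ_four, of_apply, cons_val, cons_val_one,
      Pi.smul_apply, Matrix.smul_apply, smul_eq_mul, one_apply, dotProduct, Fin.sum_univ_three,
      Fin.reduceFinMk, ↓reduceIte] <;>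
    grind

theorem bilin_eq_dotProduct (v w : Fin 3 → ℂ) : bilin v w = v ⬝ᵥ w := by
  simp [bilin, dotProduct, Fin.sum_univ_three]

theorem cF_sq (A : Fin 3 → ℂ) :
    cF A * cF A = bilin A A • (1 : Matrix (Fin 4) (Fin 4) ℂ) := by
  rw [cF, bilin_eq_dotProduct]
  exact blockM_smul_mul_self A (by simp)
end
end

section
/- For A₁, A₂ ∈ ℂ³, with cF(A) the 4×4 matrix [[0, Aᵗ],[A, ×(-iA)]], one has cF(A₁)·cF(A₂) + cF(A₂)·cF(A₁) = 2⟨A₁,A₂⟩·I, where ⟨·,·⟩ is the complex-bilinear inner product on ℂ³. -/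
open Matrix

noncomputable section

/- For `C = c • A`, `D = c • B` the off-diagonal blocks of the anticommutator are
`±(A × D + B × C) = ±c (A × B + B × A) = 0`, and by
`(v × D) × C = ⟨v, C⟩ D - ⟨C, D⟩ v` the lower-right block is
`(1 + c²)(A Bᵗ + B Aᵗ) - 2c² ⟨A, B⟩ I`, which is `2 ⟨A, B⟩ I` once `c² = -1`. -/
theorem blockM_smul_anticommutator {α : Type*} [CommRing α] {c : α} (hc : c * c = -1)
    (A B : Fin 3 → α) :
    blockM A (c • A) * blockM B (c • B) + blockM B (c • B) * blockM A (c • A)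
      = (2 * (A ⬝ᵥ B)) • (1 : Matrix (Fin 4) (Fin 4) α) := by
  ext i j
  fin_cases i <;> fin_cases j <;>
    simp [blockM, dotProduct, Fin.sum_univ_three] <;> grind

theorem cF_anticommutator (A₁ A₂ : Fin 3 → ℂ) :
    cF A₁ * cF A₂ + cF A₂ * cF A₁
      = (2 * bilin A₁ A₂) • (1 : Matrix (Fin 4) (Fin 4) ℂ) := by
  rw [bilin_eq_dotProduct]
  exact blockM_smul_anticommutator (by simp) A₁ A₂
end
end

section
/- For any A₁, A₂ ∈ ℂ³, the matrices cF(A₁) = [[0, A₁ᵗ],[A₁, ×(-iA₁)]] and c̄F(A₂) = [[0, A₂ᵗ],[A₂, ×(iA₂)]] commute: cF(A₁)·c̄F(A₂) = c̄F(A₂)·cF(A₁). -/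
open Matrix

noncomputable section

/-!
Write `M(a, c) = [[0, aᵗ], [a, ×c]]`. By the BAC–CAB rule `a bᵗ - b aᵗ = ×(a × b)`, and
`[×c, ×d] = -×(c × d)`, so the commutator of `M(a, c)` and `M(b, d)` has off-diagonal blocks
`±(d × a - c × b)` and lower-right block `×(a × b - c × d)`. For `c = -i A₁`, `d = i A₂` both
vanish, because `(-i) i = 1` and the cross product is bilinear and alternating.
-/

theorem blockM_mul_comm {α : Type*} [CommRing α] {A B C D : Fin 3 → α}
    (hoff : C ⨯₃ B = D ⨯₃ A) (hdiag : A ⨯₃ B = C ⨯₃ D) :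
    blockM A C * blockM B D = blockM B D * blockM A C := by
  simp only [cross_apply, funext_iff, Fin.forall_fin_succ, IsEmpty.forall_iff,
    cons_val_zero, cons_val_succ, and_true] at hoff hdiag
  ext i j
  fin_cases i <;> fin_cases j <;>
    simp only [blockM, mul_apply, Fin.sum_univ_four, of_apply, cons_val', cons_val, cons_val_zero,
      cons_val_one, cons_val_fin_one, Fin.mk_one, Fin.zero_eta, Fin.reduceFinMk, Fin.isValue] <;>
    grind

theorem cF_commutes_cFbar (A₁ A₂ : Fin 3 → ℂ) :
    cF A₁ * cFbar A₂ = cFbar A₂ * cF A₁ := by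
  apply blockM_mul_comm
  · simp only [neg_smul, map_neg, map_smul, LinearMap.neg_apply, LinearMap.smul_apply,
      ← cross_anticomm A₁ A₂, smul_neg]
  · simp only [map_smul, LinearMap.smul_apply, smul_smul, mul_neg, Complex.I_mul_I, neg_neg,
      one_smul]
end
end

section
/- Among all 4×4 complex matrices of the block form M(A,C) = [[0, Aᵗ],[A, ×(C)]] with A, C ∈ ℂ³ and A ≠ 0, the square M(A,C)² is a scalar multiple of the identity if and only if C = iA or C = -iA. -/
open Matrix

noncomputable section

/-!
Squaring `M = [[0, Aᵗ], [A, ×C]]`, the first row of `M²` is `(A ⬝ A, -(A × C)ᵗ)` and its lower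
diagonal entries are `A k ^ 2 + C k ^ 2 - C ⬝ C`. If `M²` is scalar, then `A × C = 0`, so `C = s A`
because `A ≠ 0`, and comparing the diagonal entries gives `A k ^ 2 + C k ^ 2 = 0`, that is
`(s² + 1) A k ^ 2 = 0` for every `k`; hence `s² = -1`. Conversely `M(A, s A)² = (A ⬝ A) • 1`
whenever `s² = -1`. Over `ℂ`, `s² = -1` means `s = ±i`.
-/

lemma crossVec_eq_crossProduct {R : Type*} [CommRing R] (v w : Fin 3 → R) :
    crossVec v w = v ⨯₃ w := rfl

lemma exists_smul_eq_of_crossVec_eq_zero {K : Type*} [Field K] {v w : Fin 3 → K} (hv : v ≠ 0)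
    (h : crossVec v w = 0) : ∃ s : K, s • v = w := by
  have : ¬LinearIndependent K ![v, w] := by
    rwa [← crossProduct_ne_zero_iff_linearIndependent, not_not, ← crossVec_eq_crossProduct]
  simpa [LinearIndependent.pair_iff' hv] using this

section CommRing

variable {R : Type*} [CommRing R]

lemma blockM_mul_self_apply_zero_zero (A C : Fin 3 → R) :
    (blockM A C * blockM A C) 0 0 = A ⬝ᵥ A := by
  simp [blockM, mul_apply, Fin.sum_univ_four, dotProduct, Fin.sum_univ_three]

lemma blockM_mul_self_apply_zero_succ (A C : Fin 3 → R) (k : Fin 3) :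
    (blockM A C * blockM A C) 0 k.succ = -crossVec A C k := by
  fin_cases k <;> simp [blockM, crossVec, mul_apply, Fin.sum_univ_four] <;> ring

lemma blockM_mul_self_apply_succ_self (A C : Fin 3 → R) (k : Fin 3) :
    (blockM A C * blockM A C) k.succ k.succ = A k ^ 2 + C k ^ 2 - C ⬝ᵥ C := by
  fin_cases k <;>
    simp [blockM, mul_apply, Fin.sum_univ_four, dotProduct, Fin.sum_univ_three] <;> ring

lemma blockM_smul_mul_self_s4 {t : R} (ht : t * t = -1) (A : Fin 3 → R) :
    blockM A (t • A) * blockM A (t • A) = (A ⬝ᵥ A) • 1 := by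
  ext i j
  fin_cases i <;> fin_cases j <;>
    simp [blockM, mul_apply, Fin.sum_univ_four, dotProduct, Fin.sum_univ_three] <;>
    grind

lemma crossVec_eq_zero_of_blockM_mul_self_eq_smul_one {A C : Fin 3 → R} {c : R}
    (h : blockM A C * blockM A C = c • 1) :
    crossVec A C = 0 := by
  ext k
  simpa [blockM_mul_self_apply_zero_succ, one_apply_ne' (Fin.succ_ne_zero k)] using
    congrFun (congrFun h 0) k.succ

end CommRing

lemma sq_add_sq_eq_zero_of_blockM_mul_self_eq_smul_one {K : Type*} [Field K] [NeZero (2 : K)]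
    {A C : Fin 3 → K} {c : K} (h : blockM A C * blockM A C = c • 1) (k : Fin 3) :
    A k ^ 2 + C k ^ 2 = 0 := by
  have hc : A ⬝ᵥ A = c := by
    simpa [blockM_mul_self_apply_zero_zero] using congrFun (congrFun h 0) 0
  have hdiag (k : Fin 3) : A k ^ 2 + C k ^ 2 - C ⬝ᵥ C = c := by
    simpa [blockM_mul_self_apply_succ_self] using congrFun (congrFun h k.succ) k.succ
  have h0 := hdiag 0
  have h1 := hdiag 1
  have h2 := hdiag 2
  simp only [dotProduct, Fin.sum_univ_three] at hc h0 h1 h2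
  have : 2 * (A k ^ 2 + C k ^ 2) = 0 := by
    match k with
    | 0 => linear_combination h0 - h1 - h2 + hc
    | 1 => linear_combination h1 - h0 - h2 + hc
    | 2 => linear_combination h2 - h0 - h1 + hc
  exact (mul_eq_zero.mp this).resolve_left two_ne_zero

theorem exists_blockM_mul_self_eq_smul_one_iff {K : Type*} [Field K] [NeZero (2 : K)]
    {A : Fin 3 → K} (hA : A ≠ 0) (C : Fin 3 → K) :
    (∃ c : K, blockM A C * blockM A C = c • 1) ↔ ∃ s : K, s * s = -1 ∧ s • A = C := by
  constructor
  · rintro ⟨c, h⟩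
    obtain ⟨s, rfl⟩ := exists_smul_eq_of_crossVec_eq_zero hA
      (crossVec_eq_zero_of_blockM_mul_self_eq_smul_one h)
    obtain ⟨k, hk⟩ : ∃ k, A k ≠ 0 := Function.ne_iff.mp hA
    have hk2 := sq_add_sq_eq_zero_of_blockM_mul_self_eq_smul_one h k
    rw [Pi.smul_apply, smul_eq_mul] at hk2
    have : (s * s + 1) * A k ^ 2 = 0 := by linear_combination hk2
    refine ⟨s, eq_neg_of_add_eq_zero_left ?_, rfl⟩
    exact (mul_eq_zero.mp this).resolve_right (pow_ne_zero 2 hk)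
  · rintro ⟨s, hs, rfl⟩
    exact ⟨A ⬝ᵥ A, blockM_smul_mul_self_s4 hs A⟩

theorem blockM_sq_scalar_iff (A C : Fin 3 → ℂ) (hA : A ≠ 0) :
    (∃ c : ℂ, blockM A C * blockM A C = c • (1 : Matrix (Fin 4) (Fin 4) ℂ)) ↔
      C = Complex.I • A ∨ C = (-Complex.I) • A := by
  rw [exists_blockM_mul_self_eq_smul_one_iff hA]
  simp_rw [← Complex.I_mul_I, mul_self_eq_mul_self_iff]
  constructor
  · rintro ⟨s, rfl | rfl, rfl⟩ <;> simp
  · rintro (rfl | rfl)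
    exacts [⟨_, .inl rfl, rfl⟩, ⟨_, .inr rfl, rfl⟩]
end
end

section
/- Let E, B : ℝ⁴ → ℝ³ be smooth and set cF = [[0, (E+iB)ᵗ],[E+iB, ×(-i(E+iB))]]. Then the single complex matrix equation cF·(-∂ₜ, ∇)ᵗ = (ρ, J)ᵗ holds if and only if E and B satisfy Maxwell's equations with charge density ρ and current J. -/
/-! With `A = E + iB`, the matrix `cF A` is the block matrix `[[0, Aᵗ], [A, ×C]]` with `C = -iA`.
For any such block matrix the divergence `M·(-∂ₜ, ∇)ᵗ` is `(∇·A, ∇×C - ∂ₜA)`, and for `C = -iA`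
this is `(∇·E + i∇·B, (∇×B - ∂ₜE) - i(∇×E + ∂ₜB))`. Since `ρ` and `J` are real, comparing real
and imaginary parts gives exactly the four Maxwell equations. -/

open Matrix

noncomputable section

/-- Points of space-time `ℝ⁴`, coordinate `0` is time. -/
abbrev Pt := Fin 4 → ℝ

/-- Partial derivative in the `i`-th coordinate direction. -/
def pd {E : Type*} [NormedAddCommGroup E] [NormedSpace ℝ E]
    (i : Fin 4) (f : Pt → E) (x : Pt) : E := fderiv ℝ f x (Pi.single i 1)

/-- Spatial divergence `∇·A`. -/
def divg {E : Type*} [NormedAddCommGroup E] [NormedSpace ℝ E]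
    (A : Pt → Fin 3 → E) (x : Pt) : E := ∑ i : Fin 3, pd i.succ (fun y => A y i) x

/-- Spatial curl `∇×A`. -/
def curl {E : Type*} [NormedAddCommGroup E] [NormedSpace ℝ E]
    (A : Pt → Fin 3 → E) (x : Pt) : Fin 3 → E :=
  ![pd 2 (fun y => A y 2) x - pd 3 (fun y => A y 1) x,
    pd 3 (fun y => A y 0) x - pd 1 (fun y => A y 2) x,
    pd 1 (fun y => A y 1) x - pd 2 (fun y => A y 0) x]

/-- Spatial gradient `∇f`. -/
def grad {E : Type*} [NormedAddCommGroup E] [NormedSpace ℝ E]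
    (f : Pt → E) (x : Pt) : Fin 3 → E := fun i => pd i.succ f x

/-- Time derivative of a vector field, componentwise. -/
def pdtV {E : Type*} [NormedAddCommGroup E] [NormedSpace ℝ E]
    (A : Pt → Fin 3 → E) (x : Pt) : Fin 3 → E := fun i => pd 0 (fun y => A y i) x

/-- Spatial Laplacian `∇²f`. -/
def lap {E : Type*} [NormedAddCommGroup E] [NormedSpace ℝ E]
    (f : Pt → E) (x : Pt) : E := ∑ i : Fin 3, pd i.succ (pd i.succ f) x

/-- The matrix divergence `M·(-∂ₜ,∇)ᵗ`: `i`-th component `-∂ₜ(M_{i0}) + Σⱼ ∂ⱼ(M_{ij})`. -/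
def divNeg {E : Type*} [NormedAddCommGroup E] [NormedSpace ℝ E]
    (M : Pt → Matrix (Fin 4) (Fin 4) E) (x : Pt) : Fin 4 → E :=
  fun i => -(pd 0 (fun y => M y i 0) x) + ∑ j : Fin 3, pd j.succ (fun y => M y i j.succ) x

/-- The matrix divergence `M·(∂ₜ,∇)ᵗ`: `i`-th component `∂ₜ(M_{i0}) + Σⱼ ∂ⱼ(M_{ij})`. -/
def divPos {E : Type*} [NormedAddCommGroup E] [NormedSpace ℝ E]
    (M : Pt → Matrix (Fin 4) (Fin 4) E) (x : Pt) : Fin 4 → E :=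
  fun i => pd 0 (fun y => M y i 0) x + ∑ j : Fin 3, pd j.succ (fun y => M y i j.succ) x

/-- Maxwell's equations (1)-(4). -/
def MaxwellEq {E' : Type*} [NormedAddCommGroup E'] [NormedSpace ℝ E']
    (E B : Pt → Fin 3 → E') (ρ : Pt → E') (J : Pt → Fin 3 → E') : Prop :=
  (∀ x i, curl E x i + pdtV B x i = 0) ∧
  (∀ x i, curl B x i - pdtV E x i = J x i) ∧
  (∀ x, divg E x = ρ x) ∧
  (∀ x, divg B x = 0)

section PartialDerivative

variable {F : Type*} [NormedAddCommGroup F] [NormedSpace ℝ F]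

@[simp]
lemma pd_const (i : Fin 4) (c : F) (x : Pt) : pd i (fun _ => c) x = 0 := by
  simp [pd]

@[simp]
lemma pd_neg (i : Fin 4) (f : Pt → F) (x : Pt) : pd i (fun y => -f y) x = -pd i f x := by
  simp [pd, fderiv_fun_neg]

variable {R : Type*} [Semiring R] [Module R F] [SMulCommClass ℝ R F] [ContinuousConstSMul R F]

lemma pd_const_smul (i : Fin 4) (c : R) {f : Pt → F} {x : Pt} (hf : DifferentiableAt ℝ f x) :
    pd i (fun y => c • f y) x = c • pd i f x := by
  simp [pd, ← Pi.smul_def, fderiv_const_smul hf]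

lemma curl_const_smul (c : R) {A : Pt → Fin 3 → F} {x : Pt} (hA : DifferentiableAt ℝ A x) :
    curl (fun y => c • A y) x = c • curl A x := by
  have hA' := differentiableAt_pi.1 hA
  ext k
  fin_cases k <;> simp [curl, pd_const_smul _ c (hA' _), smul_sub]

end PartialDerivative

lemma divNeg_blockM {F : Type*} [NormedCommRing F] [NormedAlgebra ℝ F]
    (A C : Pt → Fin 3 → F) (x : Pt) :
    divNeg (fun y => blockM (A y) (C y)) x
      = Fin.cons (divg A x) (fun k => curl C x k - pdtV A x k) := by
  ext i
  refine Fin.cases ?_ (fun k => ?_) i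
  · simp [divNeg, blockM, divg, Fin.sum_univ_three]
  · rw [Fin.cons_succ]
    fin_cases k <;> simp [divNeg, blockM, curl, pdtV, Fin.sum_univ_three] <;> abel

section Complexification

open Complex

lemma ofReal_add_I_mul_eq_ofReal_iff {a b c : ℝ} : (a : ℂ) + I * b = c ↔ a = c ∧ b = 0 := by
  simp [Complex.ext_iff]

lemma pd_ofReal_add_I_mul (i : Fin 4) {f g : Pt → ℝ} {x : Pt} (hf : DifferentiableAt ℝ f x)
    (hg : DifferentiableAt ℝ g x) :
    pd i (fun y => (f y : ℂ) + I * g y) x = pd i f x + I * pd i g x := by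
  have hf' := ofRealCLM.hasFDerivAt.comp x hf.hasFDerivAt
  have hg' := ofRealCLM.hasFDerivAt.comp x hg.hasFDerivAt
  have h : HasFDerivAt (fun y => (f y : ℂ) + I * g y) _ x := hf'.add (hg'.const_mul I)
  simp [pd, h.fderiv]

variable {E B : Pt → Fin 3 → ℝ} {x : Pt}

lemma differentiableAt_complexify (hE : DifferentiableAt ℝ E x) (hB : DifferentiableAt ℝ B x) :
    DifferentiableAt ℝ (fun y i => (E y i : ℂ) + I * B y i) x := by
  fun_prop

lemma divg_complexify (hE : DifferentiableAt ℝ E x) (hB : DifferentiableAt ℝ B x) :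
    divg (fun y i => (E y i : ℂ) + I * B y i) x = divg E x + I * divg B x := by
  simp [divg, Fin.sum_univ_three, pd_ofReal_add_I_mul _ (differentiableAt_pi.1 hE _)
    (differentiableAt_pi.1 hB _)]
  ring

lemma curl_complexify (hE : DifferentiableAt ℝ E x) (hB : DifferentiableAt ℝ B x) (k : Fin 3) :
    curl (fun y i => (E y i : ℂ) + I * B y i) x k = curl E x k + I * curl B x k := by
  fin_cases k <;> simp [curl, pd_ofReal_add_I_mul _ (differentiableAt_pi.1 hE _)
    (differentiableAt_pi.1 hB _)] <;> ring

lemma pdtV_complexify (hE : DifferentiableAt ℝ E x) (hB : DifferentiableAt ℝ B x) (k : Fin 3) :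
    pdtV (fun y i => (E y i : ℂ) + I * B y i) x k = pdtV E x k + I * pdtV B x k :=
  pd_ofReal_add_I_mul _ (differentiableAt_pi.1 hE k) (differentiableAt_pi.1 hB k)

lemma divNeg_cF_complexify (hE : DifferentiableAt ℝ E x) (hB : DifferentiableAt ℝ B x) :
    divNeg (fun y => cF (fun i => (E y i : ℂ) + I * B y i)) x
      = Fin.cons (divg E x + I * divg B x)
          (fun k => ↑(curl B x k - pdtV E x k) + I * ↑(-(curl E x k + pdtV B x k))) := by
  rw [show (fun y => cF (fun i => (E y i : ℂ) + I * B y i))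
      = fun y => blockM _ ((-I) • fun i => (E y i : ℂ) + I * B y i) from rfl,
    divNeg_blockM, curl_const_smul _ (differentiableAt_complexify hE hB), divg_complexify hE hB]
  congr
  ext k
  simp only [Pi.smul_apply, smul_eq_mul, curl_complexify hE hB, pdtV_complexify hE hB]
  push_cast
  linear_combination -((curl B x k : ℝ) : ℂ) * I_sq

end Complexification

theorem maxwell_single_complex_equation_general
    (E B : Pt → Fin 3 → ℝ) (ρ : Pt → ℝ) (J : Pt → Fin 3 → ℝ)
    (hE : ContDiff ℝ (⊤ : ℕ∞) E) (hB : ContDiff ℝ (⊤ : ℕ∞) B) :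
    (∀ x, divNeg (fun y => cF (fun i => (E y i : ℂ) + Complex.I * B y i)) x
        = Fin.cons ((ρ x : ℂ)) (fun i => (J x i : ℂ))) ↔
      MaxwellEq E B ρ J := by
  have hE' : Differentiable ℝ E := hE.differentiable (by simp)
  have hB' : Differentiable ℝ B := hB.differentiable (by simp)
  simp only [divNeg_cF_complexify (hE' _) (hB' _), funext_iff, Fin.forall_fin_succ,
    Fin.cons_zero, Fin.cons_succ, ofReal_add_I_mul_eq_ofReal_iff, neg_eq_zero, forall_and,
    MaxwellEq]
  tauto

theorem maxwell_single_complex_equation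
    (E B : Pt → Fin 3 → ℝ) (ρ : Pt → ℝ) (J : Pt → Fin 3 → ℝ)
    (hE : ContDiff ℝ (⊤ : ℕ∞) E) (hB : ContDiff ℝ (⊤ : ℕ∞) B)
    (hρ : ContDiff ℝ (⊤ : ℕ∞) ρ) (hJ : ContDiff ℝ (⊤ : ℕ∞) J) :
    (∀ x, divNeg (fun y => cF (fun i => (E y i : ℂ) + Complex.I * B y i)) x
        = Fin.cons ((ρ x : ℂ)) (fun i => (J x i : ℂ))) ↔
      MaxwellEq E B ρ J :=
  maxwell_single_complex_equation_general E B ρ J hE hB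
end
end

section
/- The sixteen 4×4 complex matrices {I, cE_i, c̄E_i, cE_i·c̄E_i : i = 1,2,3} form a basis of the complex vector space of 4×4 complex matrices; moreover each of these matrices is Hermitian, squares to the identity, and all except I have trace zero. -/
open Matrix

noncomputable section

/-- `cE_i = [[0, e_iᵗ],[e_i, ×(-i e_i)]]` for the standard basis `e_i` of ℝ³. -/
def cE (i : Fin 3) : Matrix (Fin 4) (Fin 4) ℂ := cF (fun j => if j = i then 1 else 0)

/-- `c̄E_i`, the entrywise complex conjugate of `cE_i`. -/
def cEbar (i : Fin 3) : Matrix (Fin 4) (Fin 4) ℂ := cFbar (fun j => if j = i then 1 else 0)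

/-- `![1, cE 0, cE 1, cE 2]`. -/
def cE' : Fin 4 → Matrix (Fin 4) (Fin 4) ℂ := ![1, cE 0, cE 1, cE 2]

/-- `![1, c̄E 0, c̄E 1, c̄E 2]`. -/
def cEbar' : Fin 4 → Matrix (Fin 4) (Fin 4) ℂ := ![1, cEbar 0, cEbar 1, cEbar 2]

/-- The sixteen matrices `I, cE_i, c̄E_j, cE_i·c̄E_j`. -/
def fam : Fin 4 × Fin 4 → Matrix (Fin 4) (Fin 4) ℂ := fun p => cE' p.1 * cEbar' p.2

/-! All sixteen matrices are images under `ℤ[i] → ℂ` of matrices with Gaussian-integer entries,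
obtained from the same formulas with `√-1 ∈ ℤ[i]` in place of `i`. Over `ℤ[i]` equality is
decidable, so the identities `M² = 1`, `Mᴴ = M`, `tr M = 0` and `tr (M N) = 4 δ_{MN}` are finite
computations checked by the kernel, and they transfer to `ℂ` along the ring homomorphism.
The last one says the family is orthogonal for the trace form `(A, B) ↦ tr (A B)`,
hence linearly independent, and sixteen independent vectors span the 16-dimensional `M₄(ℂ)`. -/

theorem Matrix.linearIndependent_of_trace_mul {K n ι : Type*} [Field K] [Fintype n]
    {b : ι → Matrix n n K} (hne : ∀ p q, p ≠ q → (b p * b q).trace = 0)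
    (hself : ∀ p, (b p * b p).trace ≠ 0) : LinearIndependent K b :=
  LinearMap.BilinForm.linearIndependent_of_iIsOrtho
    (B := (LinearMap.mul K (Matrix n n K)).compr₂ (Matrix.traceLinearMap n K K)) hne hself

theorem GaussianInt.toComplex_sqrtd : GaussianInt.toComplex Zsqrtd.sqrtd = Complex.I := by
  simp [GaussianInt.toComplex]

section RingHom

variable {R S : Type*} [CommRing R] [CommRing S]

def unitBlock (u : R) (i : Fin 3) : Matrix (Fin 4) (Fin 4) R :=
  blockM (fun j => if j = i then 1 else 0) (u • fun j => if j = i then 1 else 0)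

-- `famOf Complex.I` unfolds to `fam`: `unitBlock (-I) i` is `cE i` and `unitBlock I i` is `cEbar i`.
def famOf (u : R) (p : Fin 4 × Fin 4) : Matrix (Fin 4) (Fin 4) R :=
  ![1, unitBlock (-u) 0, unitBlock (-u) 1, unitBlock (-u) 2] p.1 *
    ![1, unitBlock u 0, unitBlock u 1, unitBlock u 2] p.2

variable (f : R →+* S)

theorem blockM_map (A C : Fin 3 → R) : (blockM A C).map f = blockM (f ∘ A) (f ∘ C) := by
  ext i j
  fin_cases i <;> fin_cases j <;> simp [blockM]

theorem unitBlock_map (u : R) (i : Fin 3) : (unitBlock u i).map f = unitBlock (f u) i := by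
  rw [unitBlock, blockM_map, unitBlock]
  congr <;> ext j <;> simp [apply_ite f]

theorem famOf_map (u : R) (p : Fin 4 × Fin 4) : (famOf u p).map f = famOf (f u) p := by
  obtain ⟨a, b⟩ := p
  rw [famOf, famOf, Matrix.map_mul]
  congr 1
  · fin_cases a <;> simp [unitBlock_map, Matrix.map_one]
  · fin_cases b <;> simp [unitBlock_map, Matrix.map_one]

end RingHom

section GaussianModel

open GaussianInt

local notation "famℤ" => famOf (Zsqrtd.sqrtd : GaussianInt)

theorem famOf_sqrtd_mul_self : ∀ p, famℤ p * famℤ p = 1 := by decide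

theorem famOf_sqrtd_conjTranspose : ∀ p, (famℤ p)ᴴ = famℤ p := by decide

theorem trace_famOf_sqrtd : ∀ p, p ≠ (0, 0) → (famℤ p).trace = 0 := by decide

theorem trace_famOf_sqrtd_mul :
    ∀ p q, (famℤ p * famℤ q).trace = if p = q then 4 else 0 := by
  decide

theorem fam_eq_map (p : Fin 4 × Fin 4) : fam p = (famℤ p).map toComplex := by
  rw [famOf_map, toComplex_sqrtd]
  rfl

theorem fam_mul_self (p : Fin 4 × Fin 4) : fam p * fam p = 1 := by
  rw [fam_eq_map, ← Matrix.map_mul, famOf_sqrtd_mul_self,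
    Matrix.map_one _ (map_zero _) (map_one _)]

theorem fam_isHermitian (p : Fin 4 × Fin 4) : (fam p).IsHermitian := by
  rw [Matrix.IsHermitian, fam_eq_map, ← Matrix.conjTranspose_map _ toComplex_star,
    famOf_sqrtd_conjTranspose]

theorem trace_fam (p : Fin 4 × Fin 4) (hp : p ≠ (0, 0)) : (fam p).trace = 0 := by
  rw [fam_eq_map, ← AddMonoidHom.map_trace, trace_famOf_sqrtd p hp, map_zero]

theorem trace_fam_mul (p q : Fin 4 × Fin 4) :
    (fam p * fam q).trace = if p = q then 4 else 0 := by
  rw [fam_eq_map, fam_eq_map, ← Matrix.map_mul, ← AddMonoidHom.map_trace, trace_famOf_sqrtd_mul,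
    apply_ite toComplex, map_ofNat, map_zero]

end GaussianModel

theorem sixteen_matrices_basis :
    LinearIndependent ℂ fam ∧
    Submodule.span ℂ (Set.range fam) = (⊤ : Submodule ℂ (Matrix (Fin 4) (Fin 4) ℂ)) ∧
    (∀ p, (fam p).IsHermitian) ∧
    (∀ p, fam p * fam p = 1) ∧
    (∀ p, p ≠ (0, 0) → (fam p).trace = 0) := by
  have hli : LinearIndependent ℂ fam :=
    Matrix.linearIndependent_of_trace_mul (fun p q hpq => by simp [trace_fam_mul, hpq])
      (fun p => by simp [trace_fam_mul])
  refine ⟨hli, ?_, fam_isHermitian, fam_mul_self, trace_fam⟩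
  apply hli.span_eq_top_of_card_eq_finrank
  simp [Module.finrank_matrix]
end
end
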